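/- arXiv:1802.10330 — 3 statements merged into one kernel-verified Lean document; each statement's English description precedes it below -/
import Mathlib

section
/- The function Ψ_F satisfies Ψ_F(0) = 0, is non-decreasing, and is concave on [0,∞). -/
open MeasureTheory Set Filter

/-!
For fixed `t ∈ [0, 1]` the map `u ↦ 1 - t ^ u` is non-decreasing and concave on `[0, ∞)`, since
`u ↦ t ^ u` is convex. Both properties survive integration in `x` with `t = F x`. The integrals
exist because Bernoulli's inequality gives `1 - t ^ u ≤ max u 1 * (1 - t)`, and `1 - F` is
integrable on `(0, ∞)` since the mean is finite.
-/

namespace Real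

theorem convexOn_rpow_left_Ici {t : ℝ} (ht : 0 ≤ t) :
    ConvexOn ℝ (Ici 0) (fun u : ℝ => t ^ u) := by
  rcases ht.lt_or_eq with ht | rfl
  · exact (convexOn_rpow_left ht).subset (subset_univ _) (convex_Ici 0)
  refine ⟨convex_Ici 0, fun u hu v hv a b ha hb hab => ?_⟩
  simp only [smul_eq_mul]
  rcases (add_nonneg (mul_nonneg ha hu) (mul_nonneg hb hv)).eq_or_lt with h | h
  · have hau : a * u = 0 := by nlinarith [mul_nonneg ha hu, mul_nonneg hb hv]
    have hbv : b * v = 0 := by nlinarith [mul_nonneg ha hu, mul_nonneg hb hv]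
    have ha' : a * (0 : ℝ) ^ u = a := by rcases mul_eq_zero.1 hau with rfl | rfl <;> simp
    have hb' : b * (0 : ℝ) ^ v = b := by rcases mul_eq_zero.1 hbv with rfl | rfl <;> simp
    rw [← h, rpow_zero, ha', hb', hab]
  · rw [zero_rpow h.ne']
    positivity

theorem one_sub_rpow_le_mul_one_sub {t u : ℝ} (ht0 : 0 ≤ t) (ht1 : t ≤ 1) (hu : 0 ≤ u) :
    1 - t ^ u ≤ max u 1 * (1 - t) := by
  have hpow : t ^ max u 1 ≤ t ^ u :=
    rpow_le_rpow_of_exponent_ge' ht0 ht1 hu (le_max_left u 1)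
  have hbernoulli : 1 + max u 1 * (t - 1) ≤ t ^ max u 1 := by
    simpa using one_add_mul_self_le_rpow_one_add (by linarith : -1 ≤ t - 1) (le_max_right u 1)
  linarith

theorem monotoneOn_one_sub_rpow_left {t : ℝ} (ht0 : 0 ≤ t) (ht1 : t ≤ 1) :
    MonotoneOn (fun u : ℝ => 1 - t ^ u) (Ici 0) :=
  fun _u hu _v _ huv => sub_le_sub_left (rpow_le_rpow_of_exponent_ge' ht0 ht1 hu huv) 1

theorem concaveOn_one_sub_rpow_left {t : ℝ} (ht : 0 ≤ t) :
    ConcaveOn ℝ (Ici 0) (fun u : ℝ => 1 - t ^ u) := by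
  refine ⟨convex_Ici 0, fun u hu v hv a b ha hb hab => ?_⟩
  have hconv := (convexOn_rpow_left_Ici ht).2 hu hv ha hb hab
  simp only [smul_eq_mul] at hconv ⊢
  linarith

end Real

theorem MeasureTheory.Integrable.one_sub_rpow {α : Type*} [MeasurableSpace α] {μ : Measure α}
    {G : α → ℝ} (hG : AEStronglyMeasurable G μ) (hG0 : ∀ x, 0 ≤ G x) (hG1 : ∀ x, G x ≤ 1)
    (hint : Integrable (fun x => 1 - G x) μ) {u : ℝ} (hu : 0 ≤ u) :
    Integrable (fun x => 1 - G x ^ u) μ := by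
  refine (hint.const_mul (max u 1)).mono'
    (aestronglyMeasurable_const.sub ((Real.continuous_rpow_const hu).comp_aestronglyMeasurable hG))
    (ae_of_all _ fun x => ?_)
  rw [Real.norm_eq_abs, abs_of_nonneg (sub_nonneg.2 (Real.rpow_le_one (hG0 x) (hG1 x) hu))]
  exact Real.one_sub_rpow_le_mul_one_sub (hG0 x) (hG1 x) hu

section ParametricIntegral

variable {α β E : Type*} [MeasurableSpace α] {μ : Measure α}

theorem monotoneOn_integral_of_forall [Preorder β] {f : β → α → ℝ} {s : Set β}
    (hf : ∀ u ∈ s, Integrable (f u) μ)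
    (hmono : ∀ x, MonotoneOn (fun u => f u x) s) :
    MonotoneOn (fun u => ∫ x, f u x ∂μ) s :=
  fun _u hu _v hv huv => integral_mono (hf _ hu) (hf _ hv) fun x => hmono x hu hv huv

theorem concaveOn_integral_of_forall [AddCommMonoid E] [Module ℝ E] {f : E → α → ℝ} {s : Set E}
    (hs : Convex ℝ s) (hf : ∀ u ∈ s, Integrable (f u) μ)
    (hconc : ∀ x, ConcaveOn ℝ s (fun u => f u x)) :
    ConcaveOn ℝ s (fun u => ∫ x, f u x ∂μ) := by
  refine ⟨hs, fun u hu v hv a b ha hb hab => ?_⟩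
  have hfu := (hf u hu).const_mul a
  have hfv := (hf v hv).const_mul b
  calc a • ∫ x, f u x ∂μ + b • ∫ x, f v x ∂μ = ∫ x, (a * f u x + b * f v x) ∂μ := by
        rw [integral_add hfu hfv, integral_const_mul, integral_const_mul, smul_eq_mul, smul_eq_mul]
    _ ≤ ∫ x, f (a • u + b • v) x ∂μ :=
        integral_mono (hfu.add hfv) (hf _ (hs hu hv ha hb hab))
          fun x => (hconc x).2 hu hv ha hb hab

end ParametricIntegral

theorem psi_F_zero_monotone_concave_general
    (F : ℝ → ℝ)
    (hF_mono : Monotone F)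
    (hF_nonneg : ∀ x, 0 ≤ F x)
    (hF_le_one : ∀ x, F x ≤ 1)
    (hF_mean : IntegrableOn (fun x => 1 - F x) (Ioi 0))
    (Ψ : ℝ → ℝ)
    (hΨ : ∀ u : ℝ, Ψ u = ∫ x in Ioi (0 : ℝ), (1 - F x ^ u)) :
    Ψ 0 = 0 ∧ MonotoneOn Ψ (Ici 0) ∧ ConcaveOn ℝ (Ici 0) Ψ := by
  have hΨ_eq : Ψ = fun u => ∫ x in Ioi (0 : ℝ), (1 - F x ^ u) := funext hΨ
  have hint : ∀ u ∈ Ici (0 : ℝ), IntegrableOn (fun x => 1 - F x ^ u) (Ioi 0) := fun _u hu =>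
    hF_mean.one_sub_rpow hF_mono.measurable.aestronglyMeasurable hF_nonneg hF_le_one hu
  refine ⟨by simp [hΨ], ?_, ?_⟩
  · rw [hΨ_eq]
    exact monotoneOn_integral_of_forall hint fun x =>
      Real.monotoneOn_one_sub_rpow_left (hF_nonneg x) (hF_le_one x)
  · rw [hΨ_eq]
    exact concaveOn_integral_of_forall (convex_Ici 0) hint fun x =>
      Real.concaveOn_one_sub_rpow_left (hF_nonneg x)

/-- For `F` the distribution function of a non-negative random variable with
finite mean, the function `Ψ_F(u) = ∫₀^∞ (1 - F(x)^u) dx` satisfies `Ψ_F(0) = 0`, is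
non-decreasing on `[0, ∞)` and concave on `[0, ∞)`. -/
theorem psi_F_zero_monotone_concave
    (F : ℝ → ℝ)
    (hF_mono : Monotone F)
    (hF_rc : ∀ a : ℝ, ContinuousWithinAt F (Ici a) a)
    (hF_nonneg : ∀ x, 0 ≤ F x)
    (hF_le_one : ∀ x, F x ≤ 1)
    (hF_lim : Tendsto F atTop (nhds 1))
    (hF_mean : IntegrableOn (fun x => 1 - F x) (Ioi 0))
    (Ψ : ℝ → ℝ)
    (hΨ : ∀ u : ℝ, Ψ u = ∫ x in Ioi (0 : ℝ), (1 - F x ^ u)) :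
    Ψ 0 = 0 ∧ MonotoneOn Ψ (Ici 0) ∧ ConcaveOn ℝ (Ici 0) Ψ :=
  psi_F_zero_monotone_concave_general F hF_mono hF_nonneg hF_le_one hF_mean Ψ hΨ
end

section
/- Lévy–Khintchine form of Ψ_F: for every u ≥ 0, ∫₀^∞ (1 − F(x)^u) dx = ∫_{(0,∞]} (1 − e^{−ux}) ν_F(dx), where ν_F is determined by ν_F((t,∞]) = F^{-1}(e^{−t}). -/
/-!
Both sides are integrals of functions with values in `[0, 1]`, so by the layer-cake formula it
suffices to compare their superlevel sets at each level `s = 1 - e^{-ut}` with `t > 0`. On the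
left, `1 - F(x)^u > s` means `F(x) < e^{-t}`, and for `x > 0` this means `x < F⁻¹(e^{-t})` by
right continuity of `F`. On the right, `1 - e^{-ux} > s` means `x > t`, a set of `ν_F`-measure
`F⁻¹(e^{-t})`.
-/

open MeasureTheory Set Filter
open scoped ENNReal

noncomputable def quantile (F : ℝ → ℝ) (y : ℝ) : ℝ := sInf {s : ℝ | 0 < s ∧ y ≤ F s}

section Quantile

variable {F : ℝ → ℝ} {y : ℝ}

theorem le_apply_quantile (hF : Monotone F) (hF_rc : ∀ a, ContinuousWithinAt F (Ici a) a)
    (hne : {s : ℝ | 0 < s ∧ y ≤ F s}.Nonempty) : y ≤ F (quantile F y) := by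
  have hbdd : BddBelow {s : ℝ | 0 < s ∧ y ≤ F s} := ⟨0, fun s hs => hs.1.le⟩
  have hright : ∀ x, quantile F y < x → y ≤ F x := fun x hx => by
    obtain ⟨s, hs, hsx⟩ := (csInf_lt_iff hbdd hne).mp hx
    exact hs.2.trans (hF hsx.le)
  refine ge_of_tendsto ((hF_rc _).mono_left (nhdsWithin_mono _ Ioi_subset_Ici_self)) ?_
  filter_upwards [self_mem_nhdsWithin] with x hx using hright x hx

theorem setOf_lt_inter_Ioi_eq_Ioo_quantile (hF : Monotone F)
    (hF_rc : ∀ a, ContinuousWithinAt F (Ici a) a)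
    (hne : {s : ℝ | 0 < s ∧ y ≤ F s}.Nonempty) :
    {x | F x < y} ∩ Ioi 0 = Ioo 0 (quantile F y) := by
  ext x
  simp only [mem_inter_iff, mem_ofPred_eq, mem_Ioi, mem_Ioo]
  refine ⟨fun ⟨hFx, hx⟩ => ⟨hx, ?_⟩, fun ⟨hx, hxq⟩ => ⟨?_, hx⟩⟩
  · contrapose! hFx
    exact (le_apply_quantile hF hF_rc hne).trans (hF hFx)
  · contrapose! hxq
    exact csInf_le ⟨0, fun s hs => hs.1.le⟩ ⟨hx, hxq⟩

end Quantile

/-- `1 - e^{-ux}` on `[0, ∞]`, with `e^{-u·∞} = 0`. -/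
noncomputable def oneSubExpNegMul (u : ℝ) (x : ℝ≥0∞) : ℝ :=
  if x = ⊤ then 1 else 1 - Real.exp (-u * x.toReal)

section OneSubExpNegMul

variable {u : ℝ}

theorem ofReal_oneSubExpNegMul (hu : u ≠ 0) (x : ℝ≥0∞) :
    ENNReal.ofReal (oneSubExpNegMul u x) = if x = ⊤ then (if u = 0 then 0 else 1)
      else ENNReal.ofReal (1 - Real.exp (-u * x.toReal)) := by
  by_cases hx : x = ⊤ <;> simp [oneSubExpNegMul, hx, hu]

theorem measurable_oneSubExpNegMul (u : ℝ) : Measurable (oneSubExpNegMul u) :=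
  Measurable.ite (measurableSet_singleton ⊤) measurable_const (by fun_prop)

theorem oneSubExpNegMul_nonneg (hu : 0 ≤ u) (x : ℝ≥0∞) : 0 ≤ oneSubExpNegMul u x := by
  unfold oneSubExpNegMul
  split_ifs
  · exact zero_le_one
  · have : -u * x.toReal ≤ 0 := by nlinarith [ENNReal.toReal_nonneg (a := x)]
    linarith [Real.exp_le_one_iff.mpr this]

theorem oneSubExpNegMul_le_one (u : ℝ) (x : ℝ≥0∞) : oneSubExpNegMul u x ≤ 1 := by
  unfold oneSubExpNegMul
  split_ifs
  · exact le_rfl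
  · linarith [Real.exp_pos (-u * x.toReal)]

theorem one_sub_exp_lt_oneSubExpNegMul_iff (hu : 0 < u) {t : ℝ} (ht : 0 ≤ t) (x : ℝ≥0∞) :
    1 - Real.exp (-(u * t)) < oneSubExpNegMul u x ↔ ENNReal.ofReal t < x := by
  unfold oneSubExpNegMul
  split_ifs with hx
  · simp [hx, Real.exp_pos]
  · rw [ENNReal.ofReal_lt_iff_lt_toReal ht hx, sub_lt_sub_iff_left, Real.exp_lt_exp, neg_mul,
      neg_lt_neg_iff, mul_lt_mul_iff_right₀ hu]

end OneSubExpNegMul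

theorem one_sub_exp_lt_one_sub_rpow_iff {u a : ℝ} (hu : 0 < u) (ha : 0 ≤ a) (t : ℝ) :
    1 - Real.exp (-(u * t)) < 1 - a ^ u ↔ a < Real.exp (-t) := by
  rw [sub_lt_sub_iff_left, show -(u * t) = -t * u by ring, Real.exp_mul,
    Real.rpow_lt_rpow_iff ha (Real.exp_pos _).le hu]

theorem volume_setOf_one_sub_exp_lt_one_sub_rpow_inter_Ioi {F : ℝ → ℝ} (hF : Monotone F)
    (hF_rc : ∀ a, ContinuousWithinAt F (Ici a) a) (hF_nonneg : ∀ x, 0 ≤ F x)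
    (hF_lim : Tendsto F atTop (nhds 1)) {u t : ℝ} (hu : 0 < u) (ht : 0 < t) :
    volume ({x | 1 - Real.exp (-(u * t)) < 1 - F x ^ u} ∩ Ioi 0)
      = ENNReal.ofReal (quantile F (Real.exp (-t))) := by
  have hne : {s : ℝ | 0 < s ∧ Real.exp (-t) ≤ F s}.Nonempty :=
    ((eventually_gt_atTop 0).and
      (hF_lim.eventually
        (eventually_ge_nhds (Real.exp_lt_one_iff.mpr (neg_lt_zero.mpr ht))))).exists
  simp_rw [one_sub_exp_lt_one_sub_rpow_iff hu (hF_nonneg _),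
    setOf_lt_inter_Ioi_eq_Ioo_quantile hF hF_rc hne, Real.volume_Ioo, sub_zero]

theorem exists_pos_one_sub_exp_eq {u s : ℝ} (hu : 0 < u) (hs : s ∈ Ioo (0 : ℝ) 1) :
    ∃ t > 0, 1 - Real.exp (-(u * t)) = s := by
  have hlog : Real.log (1 - s) < 0 := Real.log_neg (by linarith [hs.2]) (by linarith [hs.1])
  refine ⟨-Real.log (1 - s) / u, div_pos (neg_pos.mpr hlog) hu, ?_⟩
  rw [mul_div_cancel₀ _ hu.ne', neg_neg, Real.exp_log (by linarith [hs.2])]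
  ring

theorem levy_khintchine_psi_F_general
    (F : ℝ → ℝ)
    (hF_mono : Monotone F)
    (hF_rc : ∀ a : ℝ, ContinuousWithinAt F (Ici a) a)
    (hF_nonneg : ∀ x, 0 ≤ F x)
    (hF_le_one : ∀ x, F x ≤ 1)
    (hF_lim : Tendsto F atTop (nhds 1))
    (Finv : ℝ → ℝ) (hFinv : ∀ x, Finv x = sInf {s : ℝ | 0 < s ∧ x ≤ F s})
    (ν : Measure ℝ≥0∞)
    (hν : ∀ t : ℝ, 0 < t →
      ν {x : ℝ≥0∞ | ENNReal.ofReal t < x} = ENNReal.ofReal (Finv (Real.exp (-t)))) :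
    ∀ u : ℝ, 0 ≤ u →
      ∫⁻ x in Ioi (0 : ℝ), ENNReal.ofReal (1 - F x ^ u)
        = ∫⁻ x, (if x = ⊤ then (if u = 0 then 0 else 1)
            else ENNReal.ofReal (1 - Real.exp (-u * x.toReal))) ∂ν := by
  intro u hu
  rcases hu.eq_or_lt with rfl | hu
  · simp
  obtain rfl : Finv = quantile F := funext hFinv
  have hFu_nonneg (x : ℝ) : 0 ≤ F x ^ u := Real.rpow_nonneg (hF_nonneg x) u
  have hFu_le_one (x : ℝ) : F x ^ u ≤ 1 := Real.rpow_le_one (hF_nonneg x) (hF_le_one x) hu.le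
  simp_rw [← ofReal_oneSubExpNegMul hu.ne']
  rw [lintegral_eq_lintegral_meas_lt _
      (Eventually.of_forall fun x => sub_nonneg.mpr (hFu_le_one x))
      ((measurable_const.sub (hF_mono.measurable.pow_const u)).aemeasurable),
    lintegral_eq_lintegral_meas_lt _ (Eventually.of_forall (oneSubExpNegMul_nonneg hu.le))
      (measurable_oneSubExpNegMul u).aemeasurable]
  refine setLIntegral_congr_fun measurableSet_Ioi fun s hs => ?_
  rw [Measure.restrict_apply' measurableSet_Ioi]
  rcases lt_or_ge s 1 with hs1 | hs1
  · obtain ⟨t, ht, rfl⟩ := exists_pos_one_sub_exp_eq hu ⟨hs, hs1⟩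
    simp_rw [volume_setOf_one_sub_exp_lt_one_sub_rpow_inter_Ioi hF_mono hF_rc hF_nonneg hF_lim
      hu ht, one_sub_exp_lt_oneSubExpNegMul_iff hu ht.le, hν t ht]
  · have hL (x : ℝ) : ¬ s < 1 - F x ^ u := by linarith [hFu_nonneg x]
    have hR (x : ℝ≥0∞) : ¬ s < oneSubExpNegMul u x := by
      linarith [oneSubExpNegMul_le_one u x]
    simp [hL, hR]

/-- Lévy–Khintchine form of `Ψ_F`: for every `u ≥ 0`,
`∫₀^∞ (1 − F(x)^u) dx = ∫_{(0,∞]} (1 − e^{−ux}) ν_F(dx)`, where `ν_F` is the measure on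
`(0,∞]` determined by `ν_F((t,∞]) = F⁻¹(e^{−t})`, with the convention `e^{−u·∞} = 0`
for `u > 0`. -/
theorem levy_khintchine_psi_F
    (F : ℝ → ℝ)
    (hF_mono : Monotone F)
    (hF_rc : ∀ a : ℝ, ContinuousWithinAt F (Ici a) a)
    (hF_nonneg : ∀ x, 0 ≤ F x)
    (hF_le_one : ∀ x, F x ≤ 1)
    (hF_neg : ∀ x < 0, F x = 0)
    (hF_lim : Tendsto F atTop (nhds 1))
    (hF_mean : IntegrableOn (fun x => 1 - F x) (Ioi 0))
    (hF_pos : 0 < ∫ x in Ioi (0 : ℝ), (1 - F x))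
    (Finv : ℝ → ℝ) (hFinv : ∀ x, Finv x = sInf {s : ℝ | 0 < s ∧ x ≤ F s})
    (ν : Measure ℝ≥0∞)
    (hν0 : ν {0} = 0)
    (hν : ∀ t : ℝ, 0 < t →
      ν {x : ℝ≥0∞ | ENNReal.ofReal t < x} = ENNReal.ofReal (Finv (Real.exp (-t)))) :
    ∀ u : ℝ, 0 ≤ u →
      ∫⁻ x in Ioi (0 : ℝ), ENNReal.ofReal (1 - F x ^ u)
        = ∫⁻ x, (if x = ⊤ then (if u = 0 then 0 else 1)
            else ENNReal.ofReal (1 - Real.exp (-u * x.toReal))) ∂ν :=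
  levy_khintchine_psi_F_general F hF_mono hF_rc hF_nonneg hF_le_one hF_lim Finv hFinv ν hν
end

section
/- The measure ν_F satisfies the Lévy integrability condition ∫₀^1 x ν_F(dx) < ∞; in fact ∫₀^1 x ν_F(dx) ≤ 2∫₀^∞ (1−F(x)) dx < ∞. -/
open MeasureTheory Set Filter
open scoped ENNReal NNReal

/-! Writing `x = ∫₀¹ 1{t < x} dt`, the left-hand side is at most
`∫₀¹ ν(t,∞] dt = ∫₀¹ F⁻¹(e^{-t}) dt`.
Since `F < u` on `(0, F⁻¹(u))`, each `F⁻¹(e^{-t})` is at most the Lebesgue measure of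
`{x > 0 | F x < e^{-t}}`, which is contained in `{x > 0 | t < 2 (1 - F x)}` because
`e^{-t} ≤ 1 - t/2` on `[0,1]`; integrating over `t` (layer cake) gives `2 ∫₀^∞ (1 - F)`. -/

theorem Real.exp_neg_le_one_sub_half {t : ℝ} (ht₀ : 0 ≤ t) (ht₁ : t ≤ 1) :
    Real.exp (-t) ≤ 1 - t / 2 := by
  have h1t : 0 < 1 + t := by linarith
  calc Real.exp (-t) = (Real.exp t)⁻¹ := Real.exp_neg t
    _ ≤ (1 + t)⁻¹ := inv_anti₀ h1t (by linarith [Real.add_one_le_exp t])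
    _ ≤ 1 - t / 2 := by
      rw [inv_le_iff_one_le_mul₀ h1t]
      nlinarith

theorem lt_of_lt_sInf_setOf_pos_le {F : ℝ → ℝ} {u x : ℝ} (hx : 0 < x)
    (h : x < sInf {s : ℝ | 0 < s ∧ u ≤ F s}) : F x < u := by
  by_contra! hux
  exact h.not_ge (csInf_le ⟨0, fun s hs => hs.1.le⟩ ⟨hx, hux⟩)

theorem ofReal_sInf_setOf_pos_le_le_volume (F : ℝ → ℝ) (u : ℝ) :
    ENNReal.ofReal (sInf {s : ℝ | 0 < s ∧ u ≤ F s})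
      ≤ volume.restrict (Ioi 0) {x | F x < u} := by
  rw [Measure.restrict_apply' measurableSet_Ioi, ← sub_zero (sInf _), ← Real.volume_Ioo]
  exact measure_mono fun x ⟨hx₀, hx⟩ => ⟨lt_of_lt_sInf_setOf_pos_le hx₀ hx, hx₀⟩

theorem setLIntegral_Iic_one_le_of_tail_le {μ : Measure ℝ≥0∞} {g : ℝ → ℝ≥0∞}
    (hg : ∀ t ∈ Ioo (0 : ℝ) 1, μ (Ioi (ENNReal.ofReal t)) ≤ g t) :
    ∫⁻ x in Iic 1, x ∂μ ≤ ∫⁻ t in Ioo 0 1, g t := by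
  have hne_top : ∀ x ∈ Iic (1 : ℝ≥0∞), x ≠ ∞ := fun _ hx =>
    ne_top_of_le_ne_top ENNReal.one_ne_top hx
  calc ∫⁻ x in Iic 1, x ∂μ = ∫⁻ x in Iic 1, ENNReal.ofReal x.toReal ∂μ :=
        setLIntegral_congr_fun measurableSet_Iic fun x hx =>
          (ENNReal.ofReal_toReal (hne_top x hx)).symm
    _ = ∫⁻ t in Ioi 0, μ.restrict (Iic 1) {x | t < x.toReal} :=
        lintegral_eq_lintegral_meas_lt _ (.of_forall fun _ => ENNReal.toReal_nonneg)
          ENNReal.measurable_toReal.aemeasurable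
    _ ≤ ∫⁻ t in Ioi 0, (Ioo 0 1).indicator g t := by
      refine setLIntegral_mono' measurableSet_Ioi fun t ht₀ => ?_
      rw [Measure.restrict_apply' measurableSet_Iic]
      by_cases ht₁ : t < 1
      · rw [indicator_of_mem (show t ∈ Ioo 0 1 from ⟨ht₀, ht₁⟩)]
        refine (measure_mono fun x hx => ?_).trans (hg t ⟨ht₀, ht₁⟩)
        exact (ENNReal.ofReal_lt_iff_lt_toReal ht₀.le (hne_top x hx.2)).mpr hx.1
      · refine (measure_mono_null (fun x hx => ?_) measure_empty).trans_le zero_le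
        have : x.toReal ≤ 1 := ENNReal.toReal_le_of_le_ofReal zero_le_one (by simpa using hx.2)
        exact ht₁ (hx.1.trans_le this)
    _ ≤ ∫⁻ t, (Ioo 0 1).indicator g t := setLIntegral_le_lintegral _ _
    _ = ∫⁻ t in Ioo 0 1, g t := lintegral_indicator measurableSet_Ioo _

theorem lintegral_Ioo_measure_lt_exp_neg_le {α : Type*} [MeasurableSpace α] {μ : Measure α}
    {F : α → ℝ} (hF : ∀ x, F x ≤ 1) (hF_meas : AEMeasurable F μ) :
    ∫⁻ t in Ioo 0 1, μ {x | F x < Real.exp (-t)}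
      ≤ 2 * ∫⁻ x, ENNReal.ofReal (1 - F x) ∂μ := by
  calc ∫⁻ t in Ioo 0 1, μ {x | F x < Real.exp (-t)}
      ≤ ∫⁻ t in Ioo 0 1, μ {x | t < 2 * (1 - F x)} := by
        refine setLIntegral_mono' measurableSet_Ioo fun t ht => measure_mono fun x hx => ?_
        have := Real.exp_neg_le_one_sub_half ht.1.le ht.2.le
        simp only [mem_ofPred_eq] at hx ⊢
        linarith
    _ ≤ ∫⁻ t in Ioi 0, μ {x | t < 2 * (1 - F x)} := lintegral_mono_set Ioo_subset_Ioi_self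
    _ = ∫⁻ x, ENNReal.ofReal (2 * (1 - F x)) ∂μ :=
        (lintegral_eq_lintegral_meas_lt μ (.of_forall fun x => by simp [hF x])
          ((hF_meas.const_sub 1).const_mul 2)).symm
    _ = 2 * ∫⁻ x, ENNReal.ofReal (1 - F x) ∂μ := by
        simp_rw [ENNReal.ofReal_mul zero_le_two, ENNReal.ofReal_ofNat]
        exact lintegral_const_mul' 2 _ ENNReal.ofNat_ne_top

theorem levy_measure_integrability_general
    (F : ℝ → ℝ)
    (hF_le_one : ∀ x, F x ≤ 1)
    (hF_mean : IntegrableOn (fun x => 1 - F x) (Ioi 0))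
    (Finv : ℝ → ℝ) (hFinv : ∀ x, Finv x = sInf {s : ℝ | 0 < s ∧ x ≤ F s})
    (ν : Measure ℝ≥0∞)
    (hν : ∀ t : ℝ, 0 < t →
      ν {x : ℝ≥0∞ | ENNReal.ofReal t < x} = ENNReal.ofReal (Finv (Real.exp (-t)))) :
    (∫⁻ x in {x : ℝ≥0∞ | 0 < x ∧ x ≤ 1}, x ∂ν)
        ≤ 2 * ∫⁻ x in Ioi (0 : ℝ), ENNReal.ofReal (1 - F x) ∧
      2 * (∫⁻ x in Ioi (0 : ℝ), ENNReal.ofReal (1 - F x)) < ⊤ := by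
  refine ⟨?_, ENNReal.mul_lt_top ENNReal.ofNat_lt_top hF_mean.setLIntegral_lt_top⟩
  have hF_meas : AEMeasurable F (volume.restrict (Ioi 0)) := by
    simpa using hF_mean.aemeasurable.const_sub 1
  calc ∫⁻ x in {x : ℝ≥0∞ | 0 < x ∧ x ≤ 1}, x ∂ν ≤ ∫⁻ x in Iic 1, x ∂ν :=
        lintegral_mono_set fun _ hx => hx.2
    _ ≤ ∫⁻ t in Ioo 0 1, volume.restrict (Ioi 0) {x | F x < Real.exp (-t)} :=
        setLIntegral_Iic_one_le_of_tail_le fun t ht =>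
          (hν t ht.1).trans_le (hFinv _ ▸ ofReal_sInf_setOf_pos_le_le_volume F _)
    _ ≤ 2 * ∫⁻ x in Ioi 0, ENNReal.ofReal (1 - F x) :=
        lintegral_Ioo_measure_lt_exp_neg_le hF_le_one hF_meas

/-- The measure `ν_F` (on `(0,∞]`, with survival function
`ν_F((t,∞]) = F⁻¹(e^{−t})`) satisfies the Lévy integrability condition
`∫₀^1 x ν_F(dx) < ∞`; in fact `∫₀^1 x ν_F(dx) ≤ 2 ∫₀^∞ (1 − F(x)) dx < ∞`. -/
theorem levy_measure_integrability
    (F : ℝ → ℝ)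
    (hF_mono : Monotone F)
    (hF_rc : ∀ a : ℝ, ContinuousWithinAt F (Ici a) a)
    (hF_nonneg : ∀ x, 0 ≤ F x)
    (hF_le_one : ∀ x, F x ≤ 1)
    (hF_neg : ∀ x < 0, F x = 0)
    (hF_lim : Tendsto F atTop (nhds 1))
    (hF_mean : IntegrableOn (fun x => 1 - F x) (Ioi 0))
    (Finv : ℝ → ℝ) (hFinv : ∀ x, Finv x = sInf {s : ℝ | 0 < s ∧ x ≤ F s})
    (ν : Measure ℝ≥0∞)
    (hν0 : ν {0} = 0)
    (hν : ∀ t : ℝ, 0 < t →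
      ν {x : ℝ≥0∞ | ENNReal.ofReal t < x} = ENNReal.ofReal (Finv (Real.exp (-t)))) :
    (∫⁻ x in {x : ℝ≥0∞ | 0 < x ∧ x ≤ 1}, x ∂ν)
        ≤ 2 * ∫⁻ x in Ioi (0 : ℝ), ENNReal.ofReal (1 - F x) ∧
      2 * (∫⁻ x in Ioi (0 : ℝ), ENNReal.ofReal (1 - F x)) < ⊤ :=
  levy_measure_integrability_general F hF_le_one hF_mean Finv hFinv ν hν
end
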